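/- (Trace-type boundary estimate.) Let p and u=(u₁,u₂) be smooth functions on ℝ×[0,1], Γ-periodic in x₁, with ∇·u=0 in Ω and u₂=0 at x₂=0 and at x₂=1. Then |∫₀^Γ ( p(x₁,1)·∂₁u₁(x₁,1) + p(x₁,0)·∂₁u₁(x₁,0) ) dx₁| ≤ 3·‖p‖_{H¹}·‖∂₂u‖_{L²}. -/

import Mathlib

/-!
Put `w(x₂) = 2x₂ - 1`. Incompressibility turns the boundary integrand into
`-[w p ∂₂u₂]₀¹ = -∫₀¹ ∂₂(w p ∂₂u₂) dx₂`. In the interior `∂₂²u₂ = -∂₂∂₁u₁ = -∂₁∂₂u₁`, and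
`∫_Ω w ∂₁(p ∂₂u₁) = 0` by periodicity in `x₁`, so the term `w p ∂₂²u₂` may be replaced by
`w ∂₁p ∂₂u₁`. The boundary integral is thus `-∫_Ω ((2p + w ∂₂p) ∂₂u₂ + w ∂₁p ∂₂u₁)`, and since
`|w| ≤ 1` the integrand is pointwise at most `3 (p² + |∇p|²)^{1/2} |∂₂u|`; Cauchy–Schwarz concludes.
-/

noncomputable section
open MeasureTheory Filter Set
open scoped ENNReal

namespace RB

/-- A time-dependent scalar field: arguments t, x₁, x₂. -/
abbrev TField := ℝ → ℝ → ℝ → ℝ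
/-- A static scalar field: arguments x₁, x₂. -/
abbrev SField := ℝ → ℝ → ℝ

def tsmooth (f : TField) : Prop :=
  ContDiff ℝ (⊤ : ℕ∞) (fun q : ℝ × ℝ × ℝ => f q.1 q.2.1 q.2.2)
def ssmooth (f : SField) : Prop :=
  ContDiff ℝ (⊤ : ℕ∞) (fun q : ℝ × ℝ => f q.1 q.2)
def tperiodic (Γ : ℝ) (f : TField) : Prop := ∀ t x1 x2, f t (x1 + Γ) x2 = f t x1 x2
def speriodic (Γ : ℝ) (f : SField) : Prop := ∀ x1 x2, f (x1 + Γ) x2 = f x1 x2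

/-- time derivative -/
def dt (f : TField) : TField := fun t x1 x2 => deriv (fun s => f s x1 x2) t
/-- partial derivative in x₁ (time-dependent field) -/
def d1 (f : TField) : TField := fun t x1 x2 => deriv (fun y => f t y x2) x1
/-- partial derivative in x₂ (time-dependent field) -/
def d2 (f : TField) : TField := fun t x1 x2 => deriv (fun y => f t x1 y) x2
/-- partial derivative in x₁ (static field) -/
def q1 (f : SField) : SField := fun x1 x2 => deriv (fun y => f y x2) x1
/-- partial derivative in x₂ (static field) -/
def q2 (f : SField) : SField := fun x1 x2 => deriv (fun y => f x1 y) x2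

/-- Integral over Ω = [0,Γ]×[0,1]. -/
def intΩ (Γ : ℝ) (g : SField) : ℝ :=
  ∫ x1 in Ioc (0:ℝ) Γ, ∫ x2 in Ioc (0:ℝ) 1, g x1 x2

/-- Long-time horizontal average ⟨f⟩ of a quantity f(t, x₁). -/
def ltavg (Γ : ℝ) (f : ℝ → ℝ → ℝ) : ℝ :=
  limsup (fun t => (1/t) * ∫ s in Ioc (0:ℝ) t, (1/Γ) * ∫ x1 in Ioc (0:ℝ) Γ, f s x1) atTop

/-- spatial L² norm of a static scalar field over Ω -/
def sL2 (Γ : ℝ) (f : SField) : ℝ := Real.sqrt (intΩ Γ (fun x1 x2 => f x1 x2 ^ 2))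
/-- spatial L^r norm of a static scalar field over Ω -/
def sLr (Γ r : ℝ) (f : SField) : ℝ := (intΩ Γ (fun x1 x2 => |f x1 x2| ^ r)) ^ (1/r)
/-- H¹ norm of a static scalar field over Ω -/
def sH1 (Γ : ℝ) (f : SField) : ℝ :=
  Real.sqrt (intΩ Γ (fun x1 x2 => f x1 x2 ^ 2 + q1 f x1 x2 ^ 2 + q2 f x1 x2 ^ 2))

/-- A classical solution of the Boussinesq system on Ω = [0,Γ]×[0,1] with
Rayleigh number Ra, Prandtl number Pr, slip length Ls ∈ (0,∞]
(Navier-slip with friction coefficient `(Ls⁻¹).toReal`; for Ls = ∞ this is free-slip). -/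
structure Sol (Γ Ra Pr : ℝ) (Ls : ℝ≥0∞) where
  u1 : TField
  u2 : TField
  T : TField
  p : TField
  smooth_u1 : tsmooth u1
  smooth_u2 : tsmooth u2
  smooth_T : tsmooth T
  smooth_p : tsmooth p
  periodic_u1 : tperiodic Γ u1
  periodic_u2 : tperiodic Γ u2
  periodic_T : tperiodic Γ T
  periodic_p : tperiodic Γ p
  momentum1 : ∀ t x1 x2, 0 ≤ t → x2 ∈ Icc (0:ℝ) 1 →
    Pr⁻¹ * (dt u1 t x1 x2 + u1 t x1 x2 * d1 u1 t x1 x2 + u2 t x1 x2 * d2 u1 t x1 x2)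
      - (d1 (d1 u1) t x1 x2 + d2 (d2 u1) t x1 x2) + d1 p t x1 x2 = 0
  momentum2 : ∀ t x1 x2, 0 ≤ t → x2 ∈ Icc (0:ℝ) 1 →
    Pr⁻¹ * (dt u2 t x1 x2 + u1 t x1 x2 * d1 u2 t x1 x2 + u2 t x1 x2 * d2 u2 t x1 x2)
      - (d1 (d1 u2) t x1 x2 + d2 (d2 u2) t x1 x2) + d2 p t x1 x2 = Ra * T t x1 x2
  incomp : ∀ t x1 x2, 0 ≤ t → x2 ∈ Icc (0:ℝ) 1 →
    d1 u1 t x1 x2 + d2 u2 t x1 x2 = 0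
  heat : ∀ t x1 x2, 0 ≤ t → x2 ∈ Icc (0:ℝ) 1 →
    dt T t x1 x2 + u1 t x1 x2 * d1 T t x1 x2 + u2 t x1 x2 * d2 T t x1 x2
      - (d1 (d1 T) t x1 x2 + d2 (d2 T) t x1 x2) = 0
  T_bot : ∀ t x1, 0 ≤ t → T t x1 0 = 1
  T_top : ∀ t x1, 0 ≤ t → T t x1 1 = 0
  u2_bot : ∀ t x1, 0 ≤ t → u2 t x1 0 = 0
  u2_top : ∀ t x1, 0 ≤ t → u2 t x1 1 = 0
  slip_top : ∀ t x1, 0 ≤ t → d2 u1 t x1 1 = -(Ls⁻¹).toReal * u1 t x1 1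
  slip_bot : ∀ t x1, 0 ≤ t → d2 u1 t x1 0 = (Ls⁻¹).toReal * u1 t x1 0

variable {Γ Ra Pr : ℝ} {Ls : ℝ≥0∞}

/-- The Nusselt number Nu = ⟨∫₀¹ (u₂T − ∂₂T) dx₂⟩. -/
def Nu (S : Sol Γ Ra Pr Ls) : ℝ :=
  ltavg Γ (fun t x1 => ∫ x2 in (0:ℝ)..1, (S.u2 t x1 x2 * S.T t x1 x2 - d2 S.T t x1 x2))

/-- The initial temperature satisfies 0 ≤ T₀ ≤ 1 on Ω. -/
def T0cond (S : Sol Γ Ra Pr Ls) : Prop :=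
  ∀ x1 x2, x2 ∈ Icc (0:ℝ) 1 → S.T 0 x1 x2 ∈ Icc (0:ℝ) 1

/-- The vorticity ω = ∂₁u₂ − ∂₂u₁. -/
def vort (S : Sol Γ Ra Pr Ls) : TField :=
  fun t x1 x2 => d1 S.u2 t x1 x2 - d2 S.u1 t x1 x2

/-- |∇u|² pointwise. -/
def gradSq (S : Sol Γ Ra Pr Ls) : TField := fun t x1 x2 =>
  d1 S.u1 t x1 x2 ^ 2 + d2 S.u1 t x1 x2 ^ 2 + d1 S.u2 t x1 x2 ^ 2 + d2 S.u2 t x1 x2 ^ 2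

/-- |∇²u|² pointwise: sum of squares of all second spatial derivatives of u. -/
def hessSq (S : Sol Γ Ra Pr Ls) : TField := fun t x1 x2 =>
  d1 (d1 S.u1) t x1 x2 ^ 2 + d1 (d2 S.u1) t x1 x2 ^ 2 +
  d2 (d1 S.u1) t x1 x2 ^ 2 + d2 (d2 S.u1) t x1 x2 ^ 2 +
  d1 (d1 S.u2) t x1 x2 ^ 2 + d1 (d2 S.u2) t x1 x2 ^ 2 +
  d2 (d1 S.u2) t x1 x2 ^ 2 + d2 (d2 S.u2) t x1 x2 ^ 2

/-- ‖u(t)‖_{L²}. -/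
def uL2 (S : Sol Γ Ra Pr Ls) (t : ℝ) : ℝ :=
  Real.sqrt (intΩ Γ (fun x1 x2 => S.u1 t x1 x2 ^ 2 + S.u2 t x1 x2 ^ 2))

/-- ‖u₀‖_{W^{1,4}}. -/
def W14u0 (S : Sol Γ Ra Pr Ls) : ℝ :=
  (intΩ Γ (fun x1 x2 =>
    (S.u1 0 x1 x2 ^ 2 + S.u2 0 x1 x2 ^ 2) ^ 2 + (gradSq S 0 x1 x2) ^ 2)) ^ ((1:ℝ)/4)

/-- ‖ω(t)‖_{L⁴}. -/
def omegaL4 (S : Sol Γ Ra Pr Ls) (t : ℝ) : ℝ :=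
  (intΩ Γ (fun x1 x2 => vort S t x1 x2 ^ 4)) ^ ((1:ℝ)/4)

namespace ssmooth

variable {f : SField}

theorem hasFDerivAt (hf : ssmooth f) (z : ℝ × ℝ) :
    HasFDerivAt (fun q : ℝ × ℝ => f q.1 q.2) (fderiv ℝ (fun q : ℝ × ℝ => f q.1 q.2) z) z :=
  (hf.differentiable (by simp) z).hasFDerivAt

theorem hasDerivAt_q1 (hf : ssmooth f) (x1 x2 : ℝ) :
    HasDerivAt (fun y => f y x2) (q1 f x1 x2) x1 := by
  have h := (hf.hasFDerivAt (x1, x2)).comp_hasDerivAt x1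
    ((hasDerivAt_id x1).prodMk (hasDerivAt_const x1 x2))
  exact h.differentiableAt.hasDerivAt

theorem hasDerivAt_q2 (hf : ssmooth f) (x1 x2 : ℝ) :
    HasDerivAt (fun y => f x1 y) (q2 f x1 x2) x2 := by
  have h := (hf.hasFDerivAt (x1, x2)).comp_hasDerivAt x2
    ((hasDerivAt_const x2 x1).prodMk (hasDerivAt_id x2))
  exact h.differentiableAt.hasDerivAt

theorem q1_eq_fderiv (hf : ssmooth f) (x1 x2 : ℝ) :
    q1 f x1 x2 = fderiv ℝ (fun q : ℝ × ℝ => f q.1 q.2) (x1, x2) (1, 0) := by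
  have h := (hf.hasFDerivAt (x1, x2)).comp_hasDerivAt x1
    ((hasDerivAt_id x1).prodMk (hasDerivAt_const x1 x2))
  exact h.deriv

theorem q2_eq_fderiv (hf : ssmooth f) (x1 x2 : ℝ) :
    q2 f x1 x2 = fderiv ℝ (fun q : ℝ × ℝ => f q.1 q.2) (x1, x2) (0, 1) := by
  have h := (hf.hasFDerivAt (x1, x2)).comp_hasDerivAt x2
    ((hasDerivAt_const x2 x1).prodMk (hasDerivAt_id x2))
  exact h.deriv

theorem continuous_slice₂ (hf : ssmooth f) (x1 : ℝ) : Continuous fun y => f x1 y :=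
  continuous_iff_continuousAt.2 fun y => (hf.hasDerivAt_q2 x1 y).continuousAt

theorem contDiff_fderiv (hf : ssmooth f) :
    ContDiff ℝ (⊤ : ℕ∞) (fderiv ℝ (fun q : ℝ × ℝ => f q.1 q.2)) :=
  hf.fderiv_right (mod_cast le_rfl)

theorem q1 (hf : ssmooth f) : ssmooth (q1 f) := by
  unfold ssmooth
  simp only [hf.q1_eq_fderiv]
  exact hf.contDiff_fderiv.clm_apply contDiff_const

theorem q2 (hf : ssmooth f) : ssmooth (q2 f) := by
  unfold ssmooth
  simp only [hf.q2_eq_fderiv]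
  exact hf.contDiff_fderiv.clm_apply contDiff_const

theorem q1_q2 (hf : ssmooth f) (x1 x2 : ℝ) : RB.q1 (RB.q2 f) x1 x2 = RB.q2 (RB.q1 f) x1 x2 := by
  have hF' : HasFDerivAt (fderiv ℝ (fun q : ℝ × ℝ => f q.1 q.2))
      (fderiv ℝ (fderiv ℝ (fun q : ℝ × ℝ => f q.1 q.2)) (x1, x2)) (x1, x2) :=
    (hf.contDiff_fderiv.differentiable (by simp) (x1, x2)).hasFDerivAt
  have happly (v : ℝ × ℝ) := (ContinuousLinearMap.apply ℝ ℝ v).hasFDerivAt.comp (x1, x2) hF'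
  have h12 := (happly (0, 1)).comp_hasDerivAt x1
    ((hasDerivAt_id x1).prodMk (hasDerivAt_const x1 x2))
  have h21 := (happly (1, 0)).comp_hasDerivAt x2
    ((hasDerivAt_const x2 x1).prodMk (hasDerivAt_id x2))
  have e12 : RB.q1 (RB.q2 f) x1 x2
      = fderiv ℝ (fderiv ℝ (fun q : ℝ × ℝ => f q.1 q.2)) (x1, x2) (1, 0) (0, 1) :=
    (congrArg (deriv · x1) (funext fun y => hf.q2_eq_fderiv y x2)).trans h12.deriv
  have e21 : RB.q2 (RB.q1 f) x1 x2
      = fderiv ℝ (fderiv ℝ (fun q : ℝ × ℝ => f q.1 q.2)) (x1, x2) (0, 1) (1, 0) :=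
    (congrArg (deriv · x2) (funext fun y => hf.q1_eq_fderiv x1 y)).trans h21.deriv
  rw [e12, e21]
  exact hf.contDiffAt.isSymmSndFDerivAt
    (by simpa using WithTop.coe_le_coe.mpr (le_top : (2 : ℕ∞) ≤ ⊤)) _ _

end ssmooth

theorem speriodic.q2 {Γ : ℝ} {f : SField} (hf : speriodic Γ f) : speriodic Γ (q2 f) :=
  fun x1 x2 => congrArg (deriv · x2) (funext (hf x1))

/-- Written as a product measure so that Fubini's theorem applies directly. -/
def rectMeasure (Γ : ℝ) : Measure (ℝ × ℝ) :=
  (volume.restrict (Ioc (0:ℝ) Γ)).prod (volume.restrict (Ioc (0:ℝ) 1))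

section Rectangle

variable {Γ : ℝ}

theorem integrable_rectMeasure {F : ℝ × ℝ → ℝ} (hF : Continuous F) :
    Integrable F (rectMeasure Γ) := by
  rw [rectMeasure, Measure.prod_restrict, ← Measure.volume_eq_prod]
  exact (hF.continuousOn.integrableOn_compact (isCompact_Icc.prod isCompact_Icc)).mono_set
    (prod_mono Ioc_subset_Icc_self Ioc_subset_Icc_self)

theorem intΩ_eq_integral {g : SField} (hg : Continuous fun z : ℝ × ℝ => g z.1 z.2) :
    intΩ Γ g = ∫ z, g z.1 z.2 ∂rectMeasure Γ :=
  integral_integral (integrable_rectMeasure hg)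

theorem intΩ_eq_integral_swap {g : SField} (hg : Continuous fun z : ℝ × ℝ => g z.1 z.2) :
    intΩ Γ g = ∫ x2 in Ioc (0:ℝ) 1, ∫ x1 in Ioc (0:ℝ) Γ, g x1 x2 :=
  integral_integral_swap (integrable_rectMeasure hg)

theorem intΩ_sub {f g : SField} (hf : Continuous fun z : ℝ × ℝ => f z.1 z.2)
    (hg : Continuous fun z : ℝ × ℝ => g z.1 z.2) :
    intΩ Γ (fun x1 x2 => f x1 x2 - g x1 x2) = intΩ Γ f - intΩ Γ g := by
  rw [intΩ_eq_integral (hf.sub hg), intΩ_eq_integral hf, intΩ_eq_integral hg,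
    integral_sub (integrable_rectMeasure hf) (integrable_rectMeasure hg)]

theorem intΩ_const_mul (c : ℝ) (g : SField) :
    intΩ Γ (fun x1 x2 => c * g x1 x2) = c * intΩ Γ g := by
  simp only [intΩ, integral_const_mul]

end Rectangle

theorem sq_integral_le_integral_mul_integral {α : Type*} [MeasurableSpace α] {μ : Measure α}
    {f A B : α → ℝ} (hf : Integrable f μ) (hA : Integrable A μ) (hB : Integrable B μ)
    (hA0 : ∀ᵐ x ∂μ, 0 ≤ A x) (hB0 : ∀ᵐ x ∂μ, 0 ≤ B x) (hfAB : ∀ᵐ x ∂μ, f x ^ 2 ≤ A x * B x) :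
    (∫ x, f x ∂μ) ^ 2 ≤ (∫ x, A x ∂μ) * ∫ x, B x ∂μ := by
  -- the pointwise quadratic `A t² + 2 f t + B` is nonnegative, hence so is its integral
  have hquad (t : ℝ) :
      0 ≤ (∫ x, A x ∂μ) * (t * t) + 2 * (∫ x, f x ∂μ) * t + ∫ x, B x ∂μ := by
    have h1 : Integrable (fun x => A x * (t * t)) μ := hA.mul_const _
    have h2 : Integrable (fun x => 2 * f x * t) μ := (hf.const_mul 2).mul_const t
    have h12 : Integrable (fun x => A x * (t * t) + 2 * f x * t) μ := h1.add h2
    have hint : ∫ x, (A x * (t * t) + 2 * f x * t + B x) ∂μ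
        = (∫ x, A x ∂μ) * (t * t) + 2 * (∫ x, f x ∂μ) * t + ∫ x, B x ∂μ := by
      rw [integral_add h12 hB, integral_add h1 h2, integral_mul_const, integral_mul_const,
        integral_const_mul]
    rw [← hint]
    refine integral_nonneg_of_ae ?_
    filter_upwards [hA0, hB0, hfAB] with x hAx hBx hfx
    show 0 ≤ A x * (t * t) + 2 * f x * t + B x
    rcases hAx.eq_or_lt with hAx | hAx
    · have hfx0 : f x = 0 := pow_eq_zero_iff two_ne_zero |>.mp (by nlinarith [sq_nonneg (f x)])
      rw [← hAx, hfx0]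
      simpa using hBx
    · -- `A (A t² + 2 f t + B) = (A t + f)² + (A B - f²)`
      have : 0 ≤ A x * (A x * (t * t) + 2 * f x * t + B x) := by
        nlinarith [sq_nonneg (A x * t + f x)]
      exact nonneg_of_mul_nonneg_right this hAx
  have := discrim_le_zero hquad
  rw [discrim] at this
  nlinarith

theorem sq_intΩ_le_intΩ_mul_intΩ {Γ : ℝ} {g A B : SField}
    (hg : Continuous fun z : ℝ × ℝ => g z.1 z.2) (hA : Continuous fun z : ℝ × ℝ => A z.1 z.2)
    (hB : Continuous fun z : ℝ × ℝ => B z.1 z.2) (hA0 : ∀ x1 x2, 0 ≤ A x1 x2)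
    (hB0 : ∀ x1 x2, 0 ≤ B x1 x2)
    (hgAB : ∀ x1, ∀ x2 ∈ Ioc (0:ℝ) 1, g x1 x2 ^ 2 ≤ A x1 x2 * B x1 x2) :
    intΩ Γ g ^ 2 ≤ intΩ Γ A * intΩ Γ B := by
  rw [intΩ_eq_integral hg, intΩ_eq_integral hA, intΩ_eq_integral hB]
  refine sq_integral_le_integral_mul_integral (integrable_rectMeasure hg)
    (integrable_rectMeasure hA) (integrable_rectMeasure hB) (ae_of_all _ fun z => hA0 _ _)
    (ae_of_all _ fun z => hB0 _ _) ?_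
  have hmem : ∀ᵐ z ∂rectMeasure Γ, z.2 ∈ Ioc (0:ℝ) 1 := by
    rw [rectMeasure, Measure.prod_restrict]
    filter_upwards [ae_restrict_mem (measurableSet_Ioc.prod measurableSet_Ioc)] with z hz
    exact hz.2
  filter_upwards [hmem] with z hz
  exact hgAB z.1 z.2 hz

theorem integral_Ioc_deriv_eq_zero_of_eq {Γ : ℝ} {f f' : ℝ → ℝ} (hΓ : 0 ≤ Γ)
    (hf : ∀ x, HasDerivAt f (f' x) x) (hf' : Continuous f') (hper : f Γ = f 0) :
    ∫ x in Ioc (0:ℝ) Γ, f' x = 0 := by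
  rw [← intervalIntegral.integral_of_le hΓ,
    intervalIntegral.integral_eq_sub_of_hasDerivAt (fun x _ => hf x) (hf'.intervalIntegrable 0 Γ),
    hper, sub_self]

theorem intΩ_mul_deriv_mul_eq_zero_of_speriodic {Γ : ℝ} (hΓ : 0 ≤ Γ) {f g : SField} (w : ℝ → ℝ)
    (hw : Continuous w) (hf : ssmooth f) (hg : ssmooth g) (hfper : speriodic Γ f)
    (hgper : speriodic Γ g) :
    intΩ Γ (fun x1 x2 => w x2 * (q1 f x1 x2 * g x1 x2 + f x1 x2 * q1 g x1 x2)) = 0 := by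
  have hcont : Continuous fun z : ℝ × ℝ =>
      q1 f z.1 z.2 * g z.1 z.2 + f z.1 z.2 * q1 g z.1 z.2 := by
    have := hf.continuous
    have := hf.q1.continuous
    have := hg.continuous
    have := hg.q1.continuous
    fun_prop
  rw [intΩ_eq_integral_swap ((hw.comp continuous_snd).mul hcont)]
  refine integral_eq_zero_of_ae (ae_of_all _ fun x2 => ?_)
  dsimp only [Pi.zero_apply]
  rw [integral_const_mul, integral_Ioc_deriv_eq_zero_of_eq hΓ
    (fun x1 => (hf.hasDerivAt_q1 x1 x2).mul (hg.hasDerivAt_q1 x1 x2)) ?_ ?_, mul_zero]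
  · exact hcont.comp (Continuous.prodMk_left x2)
  · simp [← hfper 0 x2, ← hgper 0 x2]

def traceIntegrand (p u1 u2 : SField) : SField := fun x1 x2 =>
  (2 * p x1 x2 + (2 * x2 - 1) * q2 p x1 x2) * q2 u2 x1 x2 + (2 * x2 - 1) * q1 p x1 x2 * q2 u1 x1 x2

section TraceEstimate

variable {Γ : ℝ} {p u1 u2 : SField}

theorem continuous_traceIntegrand (hp : ssmooth p) (hu1 : ssmooth u1) (hu2 : ssmooth u2) :
    Continuous fun z : ℝ × ℝ => traceIntegrand p u1 u2 z.1 z.2 := by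
  have := hp.continuous
  have := hp.q1.continuous
  have := hp.q2.continuous
  have := hu1.q2.continuous
  have := hu2.q2.continuous
  unfold traceIntegrand
  fun_prop

theorem sq_traceIntegrand_le {x1 x2 : ℝ} (hx2 : x2 ∈ Icc (0:ℝ) 1) :
    traceIntegrand p u1 u2 x1 x2 ^ 2 ≤ 9 * (p x1 x2 ^ 2 + q1 p x1 x2 ^ 2 + q2 p x1 x2 ^ 2)
      * (q2 u1 x1 x2 ^ 2 + q2 u2 x1 x2 ^ 2) := by
  unfold traceIntegrand
  generalize p x1 x2 = a, q1 p x1 x2 = b, q2 p x1 x2 = c, q2 u1 x1 x2 = d, q2 u2 x1 x2 = e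
  set w := 2 * x2 - 1
  have hw2 : w ^ 2 ≤ 1 := by nlinarith [hx2.1, hx2.2]
  have hcs : ((2 * a + w * c) * e + w * b * d) ^ 2
      ≤ ((2 * a + w * c) ^ 2 + (w * b) ^ 2) * (d ^ 2 + e ^ 2) := by
    nlinarith [sq_nonneg ((2 * a + w * c) * d - w * b * e)]
  have hnorm : (2 * a + w * c) ^ 2 + (w * b) ^ 2 ≤ 9 * (a ^ 2 + b ^ 2 + c ^ 2) := by
    nlinarith [sq_nonneg (2 * a - w * c), mul_le_mul_of_nonneg_right hw2 (sq_nonneg c),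
      mul_le_mul_of_nonneg_right hw2 (sq_nonneg b)]
  exact hcs.trans (mul_le_mul_of_nonneg_right hnorm (by positivity))

theorem q2_q2_eq_neg_q1_q2 (hu1 : ssmooth u1)
    (hinc : ∀ x1 x2, x2 ∈ Icc (0:ℝ) 1 → q1 u1 x1 x2 + q2 u2 x1 x2 = 0) {x1 x2 : ℝ}
    (hx2 : x2 ∈ Ioo (0:ℝ) 1) : q2 (q2 u2) x1 x2 = -q1 (q2 u1) x1 x2 := by
  have hev : (fun y => q2 u2 x1 y) =ᶠ[nhds x2] fun y => -q1 u1 x1 y := by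
    filter_upwards [isOpen_Ioo.mem_nhds hx2] with y hy
    exact eq_neg_of_add_eq_zero_right (hinc x1 y (Ioo_subset_Icc_self hy))
  rw [hu1.q1_q2]
  exact hev.deriv_eq.trans (deriv.fun_neg ..)

theorem boundary_eq_neg_integral (hp : ssmooth p) (hu1 : ssmooth u1) (hu2 : ssmooth u2)
    (hinc : ∀ x1 x2, x2 ∈ Icc (0:ℝ) 1 → q1 u1 x1 x2 + q2 u2 x1 x2 = 0) (x1 : ℝ) :
    p x1 1 * q1 u1 x1 1 + p x1 0 * q1 u1 x1 0 = -∫ x2 in Ioc (0:ℝ) 1,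
      (traceIntegrand p u1 u2 x1 x2
        - (2 * x2 - 1) * (q1 p x1 x2 * q2 u1 x1 x2 + p x1 x2 * q1 (q2 u1) x1 x2)) := by
  have hderiv : ∀ y ∈ Ioo (0:ℝ) 1, HasDerivAt (fun y => (2 * y - 1) * (p x1 y * q2 u2 x1 y))
      (traceIntegrand p u1 u2 x1 y
        - (2 * y - 1) * (q1 p x1 y * q2 u1 x1 y + p x1 y * q1 (q2 u1) x1 y)) y := by
    intro y hy
    have h := (((hasDerivAt_id' y).const_mul 2).sub_const 1).fun_mul
      ((hp.hasDerivAt_q2 x1 y).fun_mul (hu2.q2.hasDerivAt_q2 x1 y))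
    refine h.congr_deriv ?_
    rw [q2_q2_eq_neg_q1_q2 hu1 hinc hy]
    unfold traceIntegrand
    ring
  have := hp.continuous_slice₂ x1
  have := hp.q1.continuous_slice₂ x1
  have := hp.q2.continuous_slice₂ x1
  have := hu1.q2.continuous_slice₂ x1
  have := hu1.q2.q1.continuous_slice₂ x1
  have := hu2.q2.continuous_slice₂ x1
  have hcont : Continuous fun y => traceIntegrand p u1 u2 x1 y
      - (2 * y - 1) * (q1 p x1 y * q2 u1 x1 y + p x1 y * q1 (q2 u1) x1 y) := by
    unfold traceIntegrand
    fun_prop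
  have hcontφ : Continuous fun y => (2 * y - 1) * (p x1 y * q2 u2 x1 y) := by fun_prop
  rw [← intervalIntegral.integral_of_le zero_le_one,
    intervalIntegral.integral_eq_sub_of_hasDerivAt_of_le zero_le_one hcontφ.continuousOn hderiv
      (hcont.intervalIntegrable 0 1)]
  -- by incompressibility, `(2x₂ - 1) p ∂₂u₂` is `p ∂₁u₁` at `x₂ = 0` and `-p ∂₁u₁` at `x₂ = 1`
  have h0 := hinc x1 0 (by norm_num)
  have h1 := hinc x1 1 (by norm_num)
  linear_combination p x1 1 * h1 + p x1 0 * h0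

theorem integral_boundary_eq_neg_intΩ (hΓ : 0 ≤ Γ) (hp : ssmooth p) (hu1 : ssmooth u1)
    (hu2 : ssmooth u2) (hpp : speriodic Γ p) (hpu1 : speriodic Γ u1)
    (hinc : ∀ x1 x2, x2 ∈ Icc (0:ℝ) 1 → q1 u1 x1 x2 + q2 u2 x1 x2 = 0) :
    ∫ x1 in Ioc (0:ℝ) Γ, (p x1 1 * q1 u1 x1 1 + p x1 0 * q1 u1 x1 0)
      = -intΩ Γ (traceIntegrand p u1 u2) := by
  have hflux : Continuous fun z : ℝ × ℝ => (2 * z.2 - 1)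
      * (q1 p z.1 z.2 * q2 u1 z.1 z.2 + p z.1 z.2 * q1 (q2 u1) z.1 z.2) := by
    have := hp.continuous
    have := hp.q1.continuous
    have := hu1.q2.continuous
    have := hu1.q2.q1.continuous
    fun_prop
  calc ∫ x1 in Ioc (0:ℝ) Γ, (p x1 1 * q1 u1 x1 1 + p x1 0 * q1 u1 x1 0)
      = -intΩ Γ (fun x1 x2 => traceIntegrand p u1 u2 x1 x2
          - (2 * x2 - 1) * (q1 p x1 x2 * q2 u1 x1 x2 + p x1 x2 * q1 (q2 u1) x1 x2)) := by
        rw [intΩ, ← integral_neg]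
        exact integral_congr_ae (ae_of_all _ (boundary_eq_neg_integral hp hu1 hu2 hinc))
    _ = -intΩ Γ (traceIntegrand p u1 u2) := by
        rw [intΩ_sub (continuous_traceIntegrand hp hu1 hu2) hflux,
          intΩ_mul_deriv_mul_eq_zero_of_speriodic hΓ _ (by fun_prop) hp hu1.q2 hpp hpu1.q2, sub_zero]

theorem abs_intΩ_traceIntegrand_le (hp : ssmooth p) (hu1 : ssmooth u1) (hu2 : ssmooth u2) :
    |intΩ Γ (traceIntegrand p u1 u2)| ≤ 3 * sH1 Γ p *
      Real.sqrt (intΩ Γ (fun x1 x2 => q2 u1 x1 x2 ^ 2 + q2 u2 x1 x2 ^ 2)) := by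
  have hP := hp.continuous
  have hQ1 := hp.q1.continuous
  have hQ2 := hp.q2.continuous
  have hU1 := hu1.q2.continuous
  have hU2 := hu2.q2.continuous
  have hsq := sq_intΩ_le_intΩ_mul_intΩ (Γ := Γ) (continuous_traceIntegrand hp hu1 hu2)
    (A := fun x1 x2 => 9 * (p x1 x2 ^ 2 + q1 p x1 x2 ^ 2 + q2 p x1 x2 ^ 2))
    (B := fun x1 x2 => q2 u1 x1 x2 ^ 2 + q2 u2 x1 x2 ^ 2) (by fun_prop) (by fun_prop)
    (fun _ _ => by positivity) (fun _ _ => by positivity)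
    (fun _ _ hx2 => sq_traceIntegrand_le (Ioc_subset_Icc_self hx2))
  rw [intΩ_const_mul] at hsq
  calc |intΩ Γ (traceIntegrand p u1 u2)|
      ≤ Real.sqrt (9 * intΩ Γ (fun x1 x2 => p x1 x2 ^ 2 + q1 p x1 x2 ^ 2 + q2 p x1 x2 ^ 2)
          * intΩ Γ (fun x1 x2 => q2 u1 x1 x2 ^ 2 + q2 u2 x1 x2 ^ 2)) := Real.abs_le_sqrt hsq
    _ = _ := by
        have hX : 0 ≤ intΩ Γ (fun x1 x2 => p x1 x2 ^ 2 + q1 p x1 x2 ^ 2 + q2 p x1 x2 ^ 2) :=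
          integral_nonneg fun _ => integral_nonneg fun _ => by positivity
        have hY : 0 ≤ intΩ Γ (fun x1 x2 => q2 u1 x1 x2 ^ 2 + q2 u2 x1 x2 ^ 2) :=
          integral_nonneg fun _ => integral_nonneg fun _ => by positivity
        rw [Real.sqrt_mul' _ hY, Real.sqrt_mul' _ hX, sH1, show (9 : ℝ) = 3 ^ 2 by norm_num,
          Real.sqrt_sq (by norm_num)]

end TraceEstimate

theorem trace_type_estimate_general (Γ : ℝ) (hΓ : 0 < Γ) (p u1 u2 : SField)
    (hp : ssmooth p) (hu1 : ssmooth u1) (hu2 : ssmooth u2)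
    (hpp : speriodic Γ p) (hpu1 : speriodic Γ u1)
    (hinc : ∀ x1 x2, x2 ∈ Icc (0:ℝ) 1 → q1 u1 x1 x2 + q2 u2 x1 x2 = 0) :
    |∫ x1 in Ioc (0:ℝ) Γ, (p x1 1 * q1 u1 x1 1 + p x1 0 * q1 u1 x1 0)| ≤
      3 * sH1 Γ p *
        Real.sqrt (intΩ Γ (fun x1 x2 => q2 u1 x1 x2 ^ 2 + q2 u2 x1 x2 ^ 2)) := by
  rw [integral_boundary_eq_neg_intΩ hΓ.le hp hu1 hu2 hpp hpu1 hinc, abs_neg]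
  exact abs_intΩ_traceIntegrand_le hp hu1 hu2

/-- trace-type boundary estimate. -/
theorem trace_type_estimate (Γ : ℝ) (hΓ : 0 < Γ) (p u1 u2 : SField)
    (hp : ssmooth p) (hu1 : ssmooth u1) (hu2 : ssmooth u2)
    (hpp : speriodic Γ p) (hpu1 : speriodic Γ u1) (hpu2 : speriodic Γ u2)
    (hinc : ∀ x1 x2, x2 ∈ Icc (0:ℝ) 1 → q1 u1 x1 x2 + q2 u2 x1 x2 = 0)
    (hb0 : ∀ x1, u2 x1 0 = 0) (hb1 : ∀ x1, u2 x1 1 = 0) :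
    |∫ x1 in Ioc (0:ℝ) Γ, (p x1 1 * q1 u1 x1 1 + p x1 0 * q1 u1 x1 0)| ≤
      3 * sH1 Γ p *
        Real.sqrt (intΩ Γ (fun x1 x2 => q2 u1 x1 x2 ^ 2 + q2 u2 x1 x2 ^ 2)) :=
  trace_type_estimate_general Γ hΓ p u1 u2 hp hu1 hu2 hpp hpu1 hinc

end RB
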